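/- arXiv:math/0507270 — 8 statements merged into one kernel-verified Lean document; each statement's English description precedes it below -/
import Mathlib

section
/- For all positive integers n and i with 1 ≤ i ≤ n, the identity ∑_{j=1}^n (-1)^{j+1} C(2n-i-1, n-j-i+1) · C(n+j-2, n-1) · C(2n-j-1, n-1) = C(n+i-2, n-1) · C(2n-i-1, n-1) holds, where C(a,b) denotes the binomial coefficient. -/
/-!
Write `i = d + 1` and `n = d + 1 + e`. Only the terms with `j ≤ e + 1` survive, and with
`t = e + 1 - j` trinomial revision `C(d+2e, t) C(d+2e-t, d+e) = C(d+2e, d+e) C(e, t)` pulls out the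
factor `C(d+2e, d+e) = C(2n-i-1, n-1)`. What remains, `∑ₜ (-1)^(e-t) C(e, t) C(2d+e+t, d+e)`, is the
`e`-th forward difference of `x ↦ C(x, d+e)` at `2d+e`, namely `C(2d+e, d) = C(n+i-2, n-1)`.
-/

/-- Binomial coefficient `C(a,b)` with natural upper index and integer lower
index, with the convention that it vanishes for negative lower index. -/
def zchoose (a : ℕ) (b : ℤ) : ℤ := if 0 ≤ b then (a.choose b.toNat : ℤ) else 0

open Finset

lemma zchoose_natCast (a b : ℕ) : zchoose a b = a.choose b := by
  simp [zchoose]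

lemma zchoose_of_neg {a : ℕ} {b : ℤ} (hb : b < 0) : zchoose a b = 0 :=
  if_neg (not_le.mpr hb)

theorem Nat.choose_mul_choose_sub_comm (n k l : ℕ) :
    n.choose k * (n - k).choose l = n.choose l * (n - l).choose k := by
  rcases le_or_gt (k + l) n with h | h
  · have hk := Nat.choose_mul (n := n) (k := k + l) (s := k) (by omega)
    have hl := Nat.choose_mul (n := n) (k := k + l) (s := l) (by omega)
    rw [Nat.add_sub_cancel_left] at hk
    rw [Nat.add_sub_cancel] at hl
    rw [← hk, ← hl, Nat.choose_symm_add]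
  · have vanish : ∀ a b, n < a + b → n.choose a * (n - a).choose b = 0 := fun a b hab ↦ by
      rcases le_or_gt a n with ha | ha
      · rw [Nat.choose_eq_zero_of_lt (by omega : n - a < b), mul_zero]
      · rw [Nat.choose_eq_zero_of_lt ha, zero_mul]
    rw [vanish k l h, vanish l k (by omega)]

theorem sum_range_neg_one_pow_mul_choose_mul_choose_add (k a j : ℕ) :
    ∑ t ∈ range (k + 1), (-1 : ℤ) ^ (k - t) * k.choose t * (a + t).choose (k + j) =
      a.choose j := by
  have := congr_fun (fwdDiff_iter_choose j k) a
  rw [fwdDiff_iter_eq_sum_shift] at this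
  simpa using this

lemma refined_asm_summand_eq (d e j : ℕ) (hj : 1 ≤ j ∧ j ≤ e + 1) :
    (-1 : ℤ) ^ (j + 1) * zchoose (d + 2 * e) ((d + 1 + e : ℕ) - j - (d + 1 : ℕ) + 1) *
        (d + 1 + e + j - 2).choose (d + e) * (2 * (d + 1 + e) - j - 1).choose (d + e) =
      (d + 2 * e).choose (d + e) *
        ((-1) ^ (e - (e + 1 - j)) * e.choose (e + 1 - j) *
          (2 * d + e + (e + 1 - j)).choose (e + d)) := by
  have hsign : (-1 : ℤ) ^ (j + 1) = (-1) ^ (e - (e + 1 - j)) := by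
    rw [show j + 1 = e - (e + 1 - j) + 2 by omega, pow_add]
    norm_num
  have harg : ((d + 1 + e : ℕ) : ℤ) - j - ((d + 1 : ℕ) : ℤ) + 1 = ((e + 1 - j : ℕ) : ℤ) := by
    omega
  rw [hsign, harg, zchoose_natCast, show d + 1 + e + j - 2 = d + 2 * e - (e + 1 - j) by omega,
    show 2 * (d + 1 + e) - j - 1 = 2 * d + e + (e + 1 - j) by omega, add_comm e d]
  generalize e + 1 - j = t
  have revision : ((d + 2 * e).choose t * (d + 2 * e - t).choose (d + e) : ℤ) =
      (d + 2 * e).choose (d + e) * e.choose t := by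
    rw [← Nat.cast_mul, Nat.choose_mul_choose_sub_comm, show d + 2 * e - (d + e) = e by omega]
    push_cast
    rfl
  linear_combination (-1 : ℤ) ^ (e - t) * ((2 * d + e + t).choose (d + e) : ℤ) * revision

theorem refined_asm_eigen_identity (n i : ℕ) (hi : 1 ≤ i) (hin : i ≤ n) :
    ∑ j ∈ Finset.Icc 1 n,
      (-1 : ℤ) ^ (j + 1) * zchoose (2 * n - i - 1) ((n : ℤ) - j - i + 1) *
        ((n + j - 2).choose (n - 1) : ℤ) * ((2 * n - j - 1).choose (n - 1) : ℤ)
    = ((n + i - 2).choose (n - 1) : ℤ) * ((2 * n - i - 1).choose (n - 1) : ℤ) := by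
  obtain ⟨d, rfl⟩ : ∃ d, i = d + 1 := ⟨i - 1, by omega⟩
  obtain ⟨e, rfl⟩ : ∃ e, n = d + 1 + e := ⟨n - (d + 1), by omega⟩
  rw [show 2 * (d + 1 + e) - (d + 1) - 1 = d + 2 * e by omega, show d + 1 + e - 1 = d + e by omega,
    show d + 1 + e + (d + 1) - 2 = 2 * d + e by omega]
  rw [← sum_subset (Icc_subset_Icc_right (by omega : e + 1 ≤ d + 1 + e)) ?vanish]
  case vanish =>
    intro j hj hj'
    simp only [mem_Icc] at hj hj'
    rw [zchoose_of_neg (by push_cast; omega), mul_zero, zero_mul, zero_mul]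
  calc _ = ∑ t ∈ range (e + 1), ((d + 2 * e).choose (d + e) : ℤ) *
          ((-1) ^ (e - t) * e.choose t * (2 * d + e + t).choose (e + d)) := by
        refine sum_nbij' (fun j ↦ e + 1 - j) (fun t ↦ e + 1 - t) ?_ ?_ ?_ ?_
          fun j hj ↦ refined_asm_summand_eq d e j (mem_Icc.mp hj)
        all_goals intro x hx; simp only [mem_Icc, mem_range] at hx ⊢; omega
    _ = (d + 2 * e).choose (d + e) * (2 * d + e).choose d := by
      rw [← mul_sum, sum_range_neg_one_pow_mul_choose_mul_choose_add]
    _ = _ := by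
      rw [Nat.choose_symm_of_eq_add (by omega : 2 * d + e = d + (d + e))]
      ring
end

section
/- Define a sequence of Laurent polynomials by q_0(X) = 0 and q_{j+1}(X) = (X+1)^{2j+1} − X^j − q_j(X) − q_j(X)·X^{-1}. Then every q_j is in fact a polynomial in X and q_j(0) = 0 for all j ≥ 0. -/
open LaurentPolynomial

private noncomputable def sAux : ℕ → Polynomial ℚ
  | 0 => 0
  | j + 1 => (Polynomial.X + 1) ^ 2 * sAux j + Polynomial.X ^ j

private lemma sAux_key (j : ℕ) :
    ((Polynomial.X : Polynomial ℚ) + 1) ^ (2 * j) =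
      (Polynomial.X ^ 2 + Polynomial.X + 1) * sAux j + Polynomial.X ^ j := by
  induction j with
  | zero => simp [sAux]
  | succ j ih =>
      have h : 2 * (j + 1) = 2 * j + 2 := by ring
      rw [h, pow_add, ih, sAux]
      ring

theorem laurent_recursion_gives_polynomials_vanishing_at_zero
    (q : ℕ → LaurentPolynomial ℚ) (h0 : q 0 = 0)
    (hrec : ∀ j : ℕ, q (j + 1) =
      (T 1 + 1) ^ (2 * j + 1) - (T 1) ^ j - q j - q j * T (-1)) :
    ∀ j : ℕ, ∃ p : Polynomial ℚ, Polynomial.toLaurent p = q j ∧ p.eval 0 = 0 := by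
  have main : ∀ j : ℕ, Polynomial.toLaurent (Polynomial.X * sAux j) = q j := by
    intro j
    induction j with
    | zero => simp [sAux, h0]
    | succ j ih =>
        have hpoly : Polynomial.X * sAux (j + 1) =
            ((Polynomial.X : Polynomial ℚ) + 1) ^ (2 * j + 1) - Polynomial.X ^ j
              - Polynomial.X * sAux j - sAux j := by
          have h1 : ((Polynomial.X : Polynomial ℚ) + 1) ^ (2 * j + 1) =
              ((Polynomial.X ^ 2 + Polynomial.X + 1) * sAux j + Polynomial.X ^ j)
                * (Polynomial.X + 1) := by
            rw [pow_succ, sAux_key]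
          rw [h1, sAux]
          ring
        have hdiv : Polynomial.toLaurent (Polynomial.X * sAux j) * T (-1)
            = Polynomial.toLaurent (sAux j) := by
          rw [map_mul, Polynomial.toLaurent_X, mul_comm (T 1), mul_assoc,
            ← T_add]
          simp
        rw [hrec j, ← ih, hpoly]
        simp only [map_sub]
        rw [hdiv]
        simp [map_pow, map_add]
  intro j
  exact ⟨Polynomial.X * sAux j, main j, by simp⟩
end

section
/- The generating function Q(X,Y) = ∑_{j≥0} q_j(X) Y^j of the sequence defined by q_0(X)=0 and q_{j+1}(X) = (X+1)^{2j+1} − X^j − q_j(X) − q_j(X) X^{-1} equals X·Y / ((1 − X·Y)(1 − (X+1)²·Y)) as a formal power series in Y. -/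
/-!
With `a = T`, `b = (T + 1) ^ 2` and `b - a = T ^ 2 + T + 1`, the recursion is solved by
`(b - a) q_j = T (b ^ j - a ^ j)`, as an induction using `T * T⁻¹ = 1` checks. Since
`∑ a ^ j Y ^ j = (1 - a Y)⁻¹`, the generating function of `b ^ j - a ^ j` is
`(b - a) Y / ((1 - a Y) (1 - b Y))`, and `b - a` cancels because `ℚ[T;T⁻¹]` is a domain.
-/

namespace PowerSeries

variable {R : Type*} [CommRing R]

theorem mk_pow_mul_one_sub_C_mul_X (a : R) : mk (a ^ ·) * (1 - C a * X) = 1 := by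
  simpa [rescale_mk, rescale_X] using congrArg (rescale a) (mk_one_mul_one_sub_eq_one R)

theorem mk_mul_one_sub_C_mul_X_mul_one_sub_C_mul_X [IsDomain R] {a b c : R} (hab : a ≠ b)
    {q : ℕ → R} (hq : ∀ j, (b - a) * q j = c * (b ^ j - a ^ j)) :
    mk q * ((1 - C a * X) * (1 - C b * X)) = C c * X := by
  have hmk : C (b - a) * mk q = C c * (mk (b ^ ·) - mk (a ^ ·)) := by
    ext j
    rw [coeff_C_mul, coeff_C_mul, map_sub, coeff_mk, coeff_mk, coeff_mk, hq]
  refine mul_left_cancel₀ ((map_ne_zero_iff _ C_injective).2 (sub_ne_zero.2 hab.symm)) ?_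
  calc C (b - a) * (mk q * ((1 - C a * X) * (1 - C b * X)))
      = C c * (mk (b ^ ·) * (1 - C b * X) * (1 - C a * X)
          - mk (a ^ ·) * (1 - C a * X) * (1 - C b * X)) := by
        rw [← mul_assoc, hmk]; ring
    _ = C (b - a) * (C c * X) := by
        rw [mk_pow_mul_one_sub_C_mul_X, mk_pow_mul_one_sub_C_mul_X, map_sub]; ring

end PowerSeries

namespace LaurentPolynomial

variable {R : Type*} [CommRing R]

theorem T_one_ne_T_one_add_one_sq [Nontrivial R] : (T 1 : R[T;T⁻¹]) ≠ (T 1 + 1) ^ 2 := by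
  intro h
  have h' : Polynomial.toLaurent (Polynomial.X : Polynomial R) =
      Polynomial.toLaurent ((Polynomial.X + 1) ^ 2) := by simpa using h
  simpa using congrArg (Polynomial.eval 0) (Polynomial.toLaurent_injective h')

theorem sub_mul_eq_of_recursion {q : ℕ → R[T;T⁻¹]} (h0 : q 0 = 0)
    (hrec : ∀ j : ℕ, q (j + 1) = (T 1 + 1) ^ (2 * j + 1) - T 1 ^ j - q j - q j * T (-1)) (j : ℕ) :
    ((T 1 + 1) ^ 2 - T 1) * q j = T 1 * (((T 1 + 1) ^ 2) ^ j - T 1 ^ j) := by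
  have hT : (T 1 : R[T;T⁻¹]) * T (-1) = 1 := by rw [← T_add, add_neg_cancel, T_zero]
  induction j with
  | zero => simp [h0]
  | succ j ih =>
    rw [hrec j, pow_succ _ (2 * j), pow_mul]
    linear_combination (-1 - T (-1)) * ih - (((T 1 + 1) ^ 2) ^ j - T 1 ^ j) * hT

end LaurentPolynomial

open LaurentPolynomial

theorem laurent_recursion_generating_function
    (q : ℕ → LaurentPolynomial ℚ) (h0 : q 0 = 0)
    (hrec : ∀ j : ℕ, q (j + 1) =
      (T 1 + 1) ^ (2 * j + 1) - (T 1) ^ j - q j - q j * T (-1)) :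
    PowerSeries.mk q *
        ((1 - PowerSeries.C (R := LaurentPolynomial ℚ) (T 1) * PowerSeries.X) *
          (1 - PowerSeries.C (R := LaurentPolynomial ℚ) ((T 1 + 1) ^ 2) * PowerSeries.X))
      = PowerSeries.C (R := LaurentPolynomial ℚ) (T 1) * PowerSeries.X :=
  PowerSeries.mk_mul_one_sub_C_mul_X_mul_one_sub_C_mul_X T_one_ne_T_one_add_one_sq
    (sub_mul_eq_of_recursion h0 hrec)
end

section
/- For every positive integer n, the polynomial (X_1+1)^n · ∏_{q=2}^n (1 + (X_1+1)·X_q) − ∏_{q=2}^n (1 + (X_q+1)·X_1) lies in the ideal of the polynomial ring ℂ[X_1,…,X_n] generated by the symmetric polynomials in X_1,…,X_n with zero constant term. -/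
/-!
Modulo the ideal `I`, every elementary symmetric polynomial `e_k` with `k ≥ 1` vanishes, so
`∏ q, (1 + t X_q) = ∑ k, t ^ k e_k ≡ 1` for every `t`. Hence, writing `x = X_0`, the partial product
`∏_{q ≠ 0} (1 + t X_q)` is the inverse of `1 + t x` modulo `I`. Both sides of the claim then reduce
to `(1 + x) ^ n / (1 + x + x ^ 2)`: the left one directly with `t = x + 1`, the right one after
factoring out `1 + x`, which is invertible (take `t = 1`), and using `t = x / (1 + x)`.
-/

open MvPolynomial Finset

namespace MvPolynomial

variable (σ R : Type*) [CommRing R]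

noncomputable def symmetricIdeal : Ideal (MvPolynomial σ R) :=
  Ideal.span {p | p.IsSymmetric ∧ constantCoeff p = 0}

variable {σ R} [Fintype σ]

theorem constantCoeff_esymm {k : ℕ} (hk : k ≠ 0) : constantCoeff (esymm σ R k) = 0 := by
  rw [esymm, map_sum]
  refine sum_eq_zero fun s hs => ?_
  obtain ⟨i, hi⟩ : s.Nonempty := card_pos.mp (by rw [(mem_powersetCard.mp hs).2]; omega)
  rw [map_prod]
  exact prod_eq_zero hi (constantCoeff_X R i)

theorem esymm_mem_symmetricIdeal {k : ℕ} (hk : k ≠ 0) : esymm σ R k ∈ symmetricIdeal σ R :=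
  Ideal.subset_span ⟨esymm_isSymmetric σ R k, constantCoeff_esymm hk⟩

theorem prod_one_add_mul_X_eq_sum_esymm (t : MvPolynomial σ R) :
    ∏ i, (1 + t * X i) = ∑ k ∈ range (Fintype.card σ + 1), t ^ k * esymm σ R k := by
  rw [prod_one_add, sum_powerset, card_univ]
  refine sum_congr rfl fun k _ => ?_
  rw [esymm, mul_sum]
  refine sum_congr rfl fun s hs => ?_
  rw [prod_mul_distrib, prod_const, (mem_powersetCard.mp hs).2]

theorem prod_one_add_mul_mk_X_eq_one (t : MvPolynomial σ R ⧸ symmetricIdeal σ R) :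
    ∏ i, (1 + t * Ideal.Quotient.mk _ (X i)) = 1 := by
  obtain ⟨t, rfl⟩ := Ideal.Quotient.mk_surjective t
  simp only [← map_mul, ← map_one (Ideal.Quotient.mk _), ← map_add, ← map_prod]
  rw [Ideal.Quotient.eq, prod_one_add_mul_X_eq_sum_esymm, sum_range_succ', pow_zero, esymm_zero,
    mul_one, add_sub_cancel_right]
  exact Ideal.sum_mem _ fun k _ => Ideal.mul_mem_left _ _ (esymm_mem_symmetricIdeal k.succ_ne_zero)

end MvPolynomial

theorem pow_mul_prod_erase_eq_prod_erase {ι R : Type*} [Fintype ι] [DecidableEq ι] [CommRing R]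
    {y : ι → R} (hy : ∀ t, ∏ i, (1 + t * y i) = 1) (i₀ : ι) :
    (y i₀ + 1) ^ Fintype.card ι * ∏ q ∈ univ.erase i₀, (1 + (y i₀ + 1) * y q) =
      ∏ q ∈ univ.erase i₀, (1 + (y q + 1) * y i₀) := by
  set x := y i₀
  have hsplit (t : R) : (1 + t * x) * ∏ q ∈ univ.erase i₀, (1 + t * y q) = 1 := by
    rw [mul_prod_erase _ (fun q => 1 + t * y q) (mem_univ i₀), hy]
  set v := ∏ q ∈ univ.erase i₀, (1 + y q)
  set A := ∏ q ∈ univ.erase i₀, (1 + (x + 1) * y q)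
  set B := ∏ q ∈ univ.erase i₀, (1 + x * v * y q)
  have hv : (1 + x) * v = 1 := by simpa only [one_mul] using hsplit 1
  have hA : (1 + (x + 1) * x) * A = 1 := hsplit (x + 1)
  have hB : (1 + x * v * x) * B = 1 := hsplit (x * v)
  have hAB : (x + 1) * A = B := by
    linear_combination (-(x + 1) * A) * hB + (A * B * x ^ 2) * hv + B * hA
  have hfactor : ∀ q ∈ univ.erase i₀, 1 + (y q + 1) * x = (1 + x) * (1 + x * v * y q) :=
    fun q _ => by linear_combination (-(x * y q)) * hv
  have hcard : Fintype.card ι = #(univ.erase i₀) + 1 := by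
    rw [card_erase_add_one (mem_univ i₀), card_univ]
  rw [prod_congr rfl hfactor, prod_mul_distrib, prod_const, hcard, pow_succ, mul_assoc, hAB,
    add_comm x 1]

theorem poly_in_symmetric_ideal (n : ℕ) (hn : 0 < n) :
    ((X (⟨0, hn⟩ : Fin n) + 1) ^ n *
        ∏ q ∈ Finset.univ.filter (fun q : Fin n => q ≠ ⟨0, hn⟩),
          (1 + (X (⟨0, hn⟩ : Fin n) + 1) * X q) -
      ∏ q ∈ Finset.univ.filter (fun q : Fin n => q ≠ ⟨0, hn⟩),
          (1 + (X q + 1) * X (⟨0, hn⟩ : Fin n)))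
    ∈ Ideal.span {p : MvPolynomial (Fin n) ℂ | p.IsSymmetric ∧ constantCoeff p = 0} := by
  change _ ∈ symmetricIdeal (Fin n) ℂ
  rw [← Ideal.Quotient.eq_zero_iff_mem, map_sub, sub_eq_zero, filter_ne']
  simp only [map_mul, map_pow, map_prod, map_add, map_one]
  simpa only [Fintype.card_fin] using
    pow_mul_prod_erase_eq_prod_erase prod_one_add_mul_mk_X_eq_one (⟨0, hn⟩ : Fin n)
end

section
/- For every positive integer n, (X_1+1)^n ∏_{q=2}^n (1+(X_1+1)X_q) − ∏_{q=2}^n (1+(X_q+1)X_1) = ∑_{j=0}^{n-1} ((X_1+1)^{n+j} − X_1^j (X_1+1)^{n-j-1}) · e_j(X_2,…,X_n), where e_j is the j-th elementary symmetric polynomial. -/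
/-!
Writing `x = X₁`, both products are of the shape `∏_q (a + b X_q) = ∑_j a^(n-1-j) b^j e_j`:
the first with `(a, b) = (1, x + 1)`, the second, since `1 + (X_q + 1) x = (x + 1) + x X_q`,
with `(a, b) = (x + 1, x)`. Multiplying the first by `(x + 1)^n` and subtracting gives the
stated coefficient of each `e_j`.
-/

open MvPolynomial Finset

theorem Finset.prod_add_mul_eq_sum_powersetCard {ι R : Type*} [CommSemiring R] (s : Finset ι)
    (a b : R) (f : ι → R) :
    ∏ i ∈ s, (a + b * f i) =
      ∑ j ∈ range (#s + 1), a ^ (#s - j) * b ^ j * ∑ t ∈ powersetCard j s, ∏ i ∈ t, f i := by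
  classical
  calc ∏ i ∈ s, (a + b * f i)
      = ∑ t ∈ s.powerset, (∏ i ∈ t, b * f i) * ∏ _i ∈ s \ t, a := by
        simp_rw [add_comm a]
        exact prod_add _ _ s
    _ = ∑ j ∈ range (#s + 1), ∑ t ∈ powersetCard j s, (∏ i ∈ t, b * f i) * ∏ _i ∈ s \ t, a :=
        sum_powerset _ _
    _ = _ := by
        refine sum_congr rfl fun j _ => ?_
        rw [mul_sum]
        refine sum_congr rfl fun t ht => ?_
        obtain ⟨hts, rfl⟩ := mem_powersetCard.1 ht
        rw [prod_mul_distrib, prod_const, prod_const, card_sdiff_of_subset hts]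
        ring

theorem poly_esymm_expansion (n : ℕ) (hn : 0 < n) :
    (X (⟨0, hn⟩ : Fin n) + 1) ^ n *
        ∏ q ∈ Finset.univ.filter (fun q : Fin n => q ≠ ⟨0, hn⟩),
          (1 + (X (⟨0, hn⟩ : Fin n) + 1) * X q) -
      ∏ q ∈ Finset.univ.filter (fun q : Fin n => q ≠ ⟨0, hn⟩),
          (1 + (X q + 1) * X (⟨0, hn⟩ : Fin n))
    = ∑ j ∈ Finset.range n,
        ((X (⟨0, hn⟩ : Fin n) + 1) ^ (n + j) -
            X (⟨0, hn⟩ : Fin n) ^ j * (X (⟨0, hn⟩ : Fin n) + 1) ^ (n - j - 1)) *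
          ∑ t ∈ Finset.powersetCard j (Finset.univ.filter (fun q : Fin n => q ≠ ⟨0, hn⟩)),
            ∏ i ∈ t, (X i : MvPolynomial (Fin n) ℂ) := by
  set x : MvPolynomial (Fin n) ℂ := X ⟨0, hn⟩
  set S := univ.filter fun q : Fin n => q ≠ ⟨0, hn⟩
  have hS : #S = n - 1 := by
    rw [show S = univ.erase ⟨0, hn⟩ from filter_ne' _ _, card_erase_of_mem (mem_univ _), card_univ, Fintype.card_fin]
  have first : ∏ q ∈ S, (1 + (x + 1) * X q) =
      ∑ j ∈ range n, (x + 1) ^ j * ∑ t ∈ powersetCard j S, ∏ i ∈ t, X i := by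
    simpa only [one_pow, one_mul, hS, Nat.sub_add_cancel hn] using prod_add_mul_eq_sum_powersetCard S 1 (x + 1) X
  have second : ∏ q ∈ S, (1 + (X q + 1) * x) =
      ∑ j ∈ range n, (x + 1) ^ (n - 1 - j) * x ^ j * ∑ t ∈ powersetCard j S, ∏ i ∈ t, X i := by
    rw [prod_congr rfl fun q _ => show 1 + (X q + 1) * x = (x + 1) + x * X q by ring,
      prod_add_mul_eq_sum_powersetCard, hS, Nat.sub_add_cancel hn]
  rw [first, second, mul_sum, ← sum_sub_distrib]
  refine sum_congr rfl fun j hj => ?_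
  rw [show n - j - 1 = n - 1 - j by omega, pow_add]
  ring
end

section
/- Let (m_1,…,m_n) be nonnegative integers, not all zero, and let Δ_{k_i} denote the forward difference operator in the variable k_i. Then ∑_{π ∈ S_n} Δ^{m_{π(1)}}_{k_1} Δ^{m_{π(2)}}_{k_2} ⋯ Δ^{m_{π(n)}}_{k_n} applied to the polynomial ∏_{1≤i<j≤n} (k_j − k_i)/(j−i) is identically zero. -/
/-!
Write `C(x, r)` for the binomial coefficient, extended by zero to `r < 0`. Since `a! C(x, a)` is a
monic polynomial of degree `a` and `∏_{i<j} (j - i) = ∏_a a!`, the normalised Vandermonde product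
is `det (C(k_b, a))_{a,b} = ∑_σ sgn σ ∏_j C(k_j, σ j)`. Each operator acts on one factor, with
`Δ^M C(·, r) = C(·, r - M)`, so after substituting `π = τσ` the sum becomes
`∑_τ det (C(k_b, a - m(τ a)))_{a,b}`. Its row indices `r_a = a - m(τ a)` satisfy `r_a ≤ a` and,
as `m ≠ 0`, `∑ r_a < ∑ a`; so some `r_a` is negative (a zero row) or two coincide (equal rows).
-/

/-- Forward difference operator in the `i`-th variable, acting on functions of
integer tuples: `(Δᵢ f)(k) = f(k + eᵢ) − f(k)`. -/
def fdiff {n : ℕ} (i : Fin n) (f : (Fin n → ℤ) → ℚ) : (Fin n → ℤ) → ℚ :=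
  fun k => f (Function.update k i (k i + 1)) - f k

open Finset Function fwdDiff

noncomputable def binomial (r x : ℤ) : ℚ := if 0 ≤ r then Ring.choose (x : ℚ) r.toNat else 0

lemma binomial_of_neg {r : ℤ} (hr : r < 0) : binomial r = 0 := by
  ext x; simp [binomial, not_le.2 hr]

lemma binomial_natCast (r : ℕ) (x : ℤ) : binomial r x = Ring.choose (x : ℚ) r := by
  simp [binomial]

lemma fwdDiff_binomial_add_one (r : ℤ) : Δ_[1] (binomial (r + 1)) = binomial r := by
  ext x
  rcases r with s | _ | s
  · simp only [Int.ofNat_eq_natCast, fwdDiff, ← Nat.cast_succ, binomial_natCast, Int.cast_add,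
      Int.cast_one, Ring.choose_succ_succ, add_sub_cancel_right]
  · simp [fwdDiff, binomial]
  · have hr : Int.negSucc (s + 1) + 1 < 0 := by rw [Int.negSucc_eq]; omega
    simp [fwdDiff, binomial_of_neg hr, binomial_of_neg (Int.negSucc_lt_zero _)]

lemma fwdDiff_iter_binomial (r : ℤ) (M : ℕ) : (Δ_[1])^[M] (binomial r) = binomial (r - M) := by
  induction M generalizing r with
  | zero => simp
  | succ M ih =>
    rw [iterate_succ_apply, ← sub_add_cancel r 1, fwdDiff_binomial_add_one, ih]
    push_cast
    ring_nf

lemma fdiff_eq_fwdDiff {n : ℕ} (i : Fin n) : fdiff i = Δ_[Pi.single i 1] := by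
  ext f k
  simp only [fdiff, fwdDiff]
  congr 2
  ext j
  rcases eq_or_ne j i with rfl | hj <;> simp [*]

lemma fdiff_prod {n : ℕ} (i : Fin n) (g : Fin n → ℤ → ℚ) :
    fdiff i (fun k => ∏ j, g j (k j)) = fun k => ∏ j, update g i (Δ_[1] (g i)) j (k j) := by
  ext k
  simp only [fdiff]
  rw [prod_congr rfl fun j _ => apply_update (fun j => g j) k i (k i + 1) j,
    prod_congr rfl fun j _ => apply_update (fun j (h : ℤ → ℚ) => h (k j)) g i (Δ_[1] (g i)) j,
    prod_update_of_mem (mem_univ i), prod_update_of_mem (mem_univ i), fwdDiff,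
    ← mul_prod_erase univ (fun j => g j (k j)) (mem_univ i), sdiff_singleton_eq_erase]
  ring

lemma fdiff_iterate_prod {n : ℕ} (i : Fin n) (M : ℕ) (g : Fin n → ℤ → ℚ) :
    (fdiff i)^[M] (fun k => ∏ j, g j (k j)) =
      fun k => ∏ j, update g i ((Δ_[1])^[M] (g i)) j (k j) := by
  induction M generalizing g with
  | zero => simp
  | succ M ih =>
    rw [iterate_succ_apply, fdiff_prod, ih, update_idem, update_self, ← iterate_succ_apply]

lemma foldr_fdiff_iterate_prod {n : ℕ} (L : List (Fin n)) (hL : L.Nodup) (M : Fin n → ℕ)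
    (g : Fin n → ℤ → ℚ) :
    L.foldr (fun i F => (fdiff i)^[M i] ∘ F) id (fun k => ∏ j, g j (k j)) =
      fun k => ∏ j, (Δ_[1])^[if j ∈ L then M j else 0] (g j) (k j) := by
  induction L with
  | nil => simp
  | cons i L ih =>
    obtain ⟨hi, hL⟩ := List.nodup_cons.1 hL
    simp only [List.foldr_cons, comp_apply, ih hL, fdiff_iterate_prod]
    ext k
    refine prod_congr rfl fun j _ => ?_
    rcases eq_or_ne j i with rfl | hj
    · simp [hi]
    · simp [hj]

lemma foldr_fdiff_iterate_sum {n : ℕ} {α R : Type*} [Monoid R] [DistribMulAction R ℚ]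
    (L : List (Fin n)) (M : Fin n → ℕ) (s : Finset α) (c : α → R) (f : α → (Fin n → ℤ) → ℚ) :
    L.foldr (fun i F => (fdiff i)^[M i] ∘ F) id (∑ a ∈ s, c a • f a) =
      ∑ a ∈ s, c a • L.foldr (fun i F => (fdiff i)^[M i] ∘ F) id (f a) := by
  induction L with
  | nil => rfl
  | cons i L ih =>
    simp only [List.foldr_cons, comp_apply, ih, fdiff_eq_fwdDiff i, fwdDiff_iter_finsetSum,
      fwdDiff_iter_const_smul]

lemma prod_pairs_lt_sub_eq_det_vandermonde {R : Type*} [CommRing R] {n : ℕ} (v : Fin n → R) :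
    ∏ p ∈ univ.filter (fun p : Fin n × Fin n => p.1 < p.2), (v p.2 - v p.1) =
      (Matrix.vandermonde v).det := by
  rw [Matrix.det_vandermonde, prod_filter, Fintype.prod_prod_type]
  refine prod_congr rfl fun i _ => ?_
  rw [← prod_filter]
  congr 1
  ext j
  simp

lemma descPochhammer_eval_eq_factorial_mul_choose {K : Type*} [Field K] [CharZero K] (a : ℕ)
    (q : K) : (descPochhammer K a).eval q = a.factorial * Ring.choose q a := by
  rw [Ring.choose_eq_smul, smul_eq_mul, ← mul_assoc,
    mul_inv_cancel₀ (Nat.cast_ne_zero.2 a.factorial_ne_zero), one_mul,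
    ← Polynomial.aeval_eq_smeval, Polynomial.aeval_def, ← Polynomial.eval_map,
    descPochhammer_map]

lemma det_vandermonde_eq_prod_factorial_mul_det_binomial {n : ℕ} (x : Fin n → ℤ) :
    (Matrix.vandermonde fun i => (x i : ℚ)).det =
      (∏ a : Fin n, ((a : ℕ).factorial : ℚ)) *
        (Matrix.of fun a b : Fin n => binomial a (x b)).det := by
  rw [Matrix.det_eval_matrixOfPolynomials_eq_det_vandermonde _ (fun a => descPochhammer ℚ a)
    (fun a => descPochhammer_natDegree ℚ a) (fun a => monic_descPochhammer ℚ a),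
    ← Matrix.det_transpose, ← Matrix.det_mul_column]
  congr 1
  ext a b
  simp [descPochhammer_eval_eq_factorial_mul_choose, binomial_natCast]

lemma det_binomial_self (n : ℕ) :
    (Matrix.of fun a b : Fin n => binomial a b).det = 1 := by
  rw [Matrix.det_of_isUpperTriangular]
  · simp [binomial_natCast, Ring.choose_natCast]
  · intro a b hba
    simpa [binomial_natCast, Ring.choose_natCast] using Nat.choose_eq_zero_of_lt hba

lemma prod_pairs_lt_sub_div_sub_eq_det_binomial {n : ℕ} (k : Fin n → ℤ) :
    ∏ p ∈ univ.filter (fun p : Fin n × Fin n => p.1 < p.2),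
        (((k p.2 : ℤ) : ℚ) - ((k p.1 : ℤ) : ℚ)) / (((p.2 : ℕ) : ℚ) - ((p.1 : ℕ) : ℚ)) =
      (Matrix.of fun a b : Fin n => binomial a (k b)).det := by
  have hfact : (∏ a : Fin n, ((a : ℕ).factorial : ℚ)) ≠ 0 :=
    prod_ne_zero_iff.2 fun a _ => by positivity
  have hid := det_vandermonde_eq_prod_factorial_mul_det_binomial (fun i : Fin n => ((i : ℕ) : ℤ))
  simp only [Int.cast_natCast, det_binomial_self, mul_one] at hid
  rw [prod_div_distrib, prod_pairs_lt_sub_eq_det_vandermonde (fun i => (k i : ℚ)),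
    prod_pairs_lt_sub_eq_det_vandermonde (fun i : Fin n => ((i : ℕ) : ℚ)), hid,
    det_vandermonde_eq_prod_factorial_mul_det_binomial, mul_div_cancel_left₀ _ hfact]

lemma sum_eq_sum_val_of_injective {n : ℕ} (r : Fin n → ℤ) (hr : Injective r)
    (h0 : ∀ a, 0 ≤ r a) (hn : ∀ a, r a < n) : ∑ a, r a = ∑ a : Fin n, ((a : ℕ) : ℤ) := by
  let e : Fin n → Fin n := fun a => ⟨(r a).toNat, by have := h0 a; have := hn a; omega⟩
  have he : Bijective e := Finite.injective_iff_bijective.1 fun a b hab => hr <| by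
    simp only [e, Fin.mk.injEq] at hab; have := h0 a; have := h0 b; omega
  rw [← he.sum_comp (fun a => ((a : ℕ) : ℤ))]
  exact sum_congr rfl fun a _ => (Int.toNat_of_nonneg (h0 a)).symm

lemma det_of_lowered_rows_eq_zero {R : Type*} [CommRing R] {n : ℕ} (f : ℤ → Fin n → R)
    (hf : ∀ r < 0, f r = 0) (r : Fin n → ℤ) (hr : ∀ a, r a ≤ (a : ℕ))
    (hsum : ∑ a, r a < ∑ a : Fin n, ((a : ℕ) : ℤ)) :
    (Matrix.of fun a b => f (r a) b).det = 0 := by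
  by_cases hneg : ∃ a, r a < 0
  · obtain ⟨a, ha⟩ := hneg
    exact Matrix.det_eq_zero_of_row_eq_zero a fun b => by simp [hf _ ha]
  push Not at hneg
  by_cases hinj : Injective r
  · exact absurd (sum_eq_sum_val_of_injective r hinj hneg fun a => (hr a).trans_lt (by simp))
      hsum.ne
  obtain ⟨a, b, hab, hne⟩ := not_injective_iff.1 hinj
  exact Matrix.det_zero_of_row_eq hne (congrArg f hab)

lemma sum_sum_sign_smul_prod_eq_sum_det {R : Type*} [CommRing R] {n : ℕ} (f : ℤ → Fin n → R)
    (s : Fin n → ℤ) :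
    ∑ π : Equiv.Perm (Fin n), ∑ σ : Equiv.Perm (Fin n),
        Equiv.Perm.sign σ • ∏ j, f ((σ j : ℕ) - s (π j)) j =
      ∑ τ : Equiv.Perm (Fin n), (Matrix.of fun a b : Fin n => f ((a : ℕ) - s (τ a)) b).det := by
  simp only [Matrix.det_apply, Matrix.of_apply]
  rw [sum_comm]
  conv_rhs => rw [sum_comm]
  exact sum_congr rfl fun σ _ =>
    Fintype.sum_equiv (Equiv.mulRight σ⁻¹) _ _ fun π => by simp [Equiv.Perm.mul_apply]

theorem antisymmetrized_difference_of_vandermonde_vanishes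
    (n : ℕ) (m : Fin n → ℕ) (hm : m ≠ 0) (k : Fin n → ℤ) :
    ∑ π : Equiv.Perm (Fin n),
        ((List.finRange n).foldr (fun i F => (fdiff i)^[m (π i)] ∘ F) id)
          (fun k' : Fin n → ℤ =>
            ∏ p ∈ Finset.univ.filter (fun p : Fin n × Fin n => p.1 < p.2),
              (((k' p.2 : ℤ) : ℚ) - ((k' p.1 : ℤ) : ℚ)) /
                (((p.2 : ℕ) : ℚ) - ((p.1 : ℕ) : ℚ))) k = 0 := by
  have hV : (fun k' : Fin n → ℤ =>
      ∏ p ∈ univ.filter (fun p : Fin n × Fin n => p.1 < p.2),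
        (((k' p.2 : ℤ) : ℚ) - ((k' p.1 : ℤ) : ℚ)) / (((p.2 : ℕ) : ℚ) - ((p.1 : ℕ) : ℚ))) =
      ∑ σ : Equiv.Perm (Fin n), Equiv.Perm.sign σ • fun k' => ∏ j, binomial (σ j : ℕ) (k' j) := by
    ext k'
    rw [prod_pairs_lt_sub_div_sub_eq_det_binomial, Matrix.det_apply]
    simp [Finset.sum_apply]
  simp only [hV, foldr_fdiff_iterate_sum, foldr_fdiff_iterate_prod _ (List.nodup_finRange n),
    List.mem_finRange, if_true, fwdDiff_iter_binomial, Finset.sum_apply, Pi.smul_apply]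
  rw [sum_sum_sign_smul_prod_eq_sum_det (fun r b => binomial r (k b)) (fun j => m j)]
  refine sum_eq_zero fun τ _ => det_of_lowered_rows_eq_zero (fun r b => binomial r (k b))
    (fun r hr => funext fun b => by simp [binomial_of_neg hr]) (fun a => (a : ℕ) - (m (τ a) : ℤ))
    (fun a => by simp) ?_
  obtain ⟨a, ha⟩ := Function.ne_iff.1 hm
  have hpos : 0 < ∑ a, (m a : ℤ) :=
    sum_pos' (fun a _ => by positivity) ⟨a, mem_univ a, by simpa [Nat.pos_iff_ne_zero] using ha⟩
  rw [sum_sub_distrib, Equiv.sum_comp τ (fun a => (m a : ℤ))]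
  linarith
end

section
/- Let P(X_1,…,X_n) be a symmetric polynomial over ℂ and let E_{k_i} be the shift operator in variable k_i (E_x p(x) = p(x+1)). Then P(E_{k_1},…,E_{k_n}) applied to ∏_{1≤i<j≤n}(k_j − k_i)/(j−i) equals P(1,1,…,1) · ∏_{1≤i<j≤n}(k_j − k_i)/(j−i). -/
/-!
Let `V = ∏_{i<j} (X j - X i)` and `D = P(E) V - P(1) V`. Because `P` is symmetric and `V` is
alternating, `D` is alternating; an alternating polynomial vanishes on every diagonal
`X i = X j`, hence is divisible by each `X j - X i` and so by `V`. On the other hand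
`E^d V - V = ∏ (ℓ + c) - ∏ ℓ` for linear forms `ℓ` and constants `c`, so every monomial of `D`
has degree `< deg V`. A nonzero multiple of `V` cannot be that small, so `D = 0`; evaluating at
`k` and dividing by `∏_{i<j} (j - i)` gives the theorem.
-/

open MvPolynomial Finset Equiv
open Function (update Injective)

namespace MvPolynomial

section Shift

variable {σ τ R : Type*} [CommSemiring R]

/-- `E^d`, i.e. `f(x) ↦ f(x + d)`. -/
noncomputable def shift (d : σ →₀ ℕ) : MvPolynomial σ R →ₐ[R] MvPolynomial σ R :=
  aeval fun i => X i + (d i : MvPolynomial σ R)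

/-- `P(E) f`, where `E i` is the shift by one in the variable `i`. -/
noncomputable def applyShifts (P f : MvPolynomial σ R) : MvPolynomial σ R :=
  ∑ d ∈ P.support, P.coeff d • shift d f

theorem rename_shift {e : σ → τ} (he : Injective e) (d : σ →₀ ℕ) (f : MvPolynomial σ R) :
    rename e (shift d f) = shift (d.mapDomain e) (rename e f) := by
  change ((rename e).comp (shift d)) f = ((shift (d.mapDomain e)).comp (rename e)) f
  congr 1
  ext i
  simp [shift, Finsupp.mapDomain_apply he]

theorem rename_applyShifts {e : σ → τ} (he : Injective e) (P f : MvPolynomial σ R) :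
    rename e (applyShifts P f) = applyShifts (rename e P) (rename e f) := by
  classical
  simp only [applyShifts, map_sum, map_smul, rename_shift he, support_rename_of_injective he,
    sum_image fun _ _ _ _ h => Finsupp.mapDomain_injective he h, coeff_rename_mapDomain e he]

theorem eval_shift (x : σ → R) (d : σ →₀ ℕ) (f : MvPolynomial σ R) :
    eval x (shift d f) = eval (fun i => x i + d i) f := by
  induction f using MvPolynomial.induction_on <;> simp_all [shift]

theorem eval_applyShifts (x : σ → R) (P f : MvPolynomial σ R) :
    eval x (applyShifts P f) = ∑ d ∈ P.support, P.coeff d * eval (fun i => x i + d i) f := by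
  simp [applyShifts, eval_shift]

end Shift

section ShiftRing

variable {σ R : Type*} [CommRing R]

theorem applyShifts_neg (P f : MvPolynomial σ R) : applyShifts P (-f) = -applyShifts P f := by
  simp [applyShifts]

theorem applyShifts_sub_eval_one_smul (P f : MvPolynomial σ R) :
    applyShifts P f - eval (fun _ => 1) P • f =
      ∑ d ∈ P.support, P.coeff d • (shift d f - f) := by
  simp [applyShifts, eval_eq, smul_sub, sum_sub_distrib, sum_smul]

end ShiftRing

section Diagonal

variable {σ R : Type*} [CommRing R]

theorem X_sub_X_dvd_of_aeval_update_eq_zero [DecidableEq σ] {i j : σ} {F : MvPolynomial σ R}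
    (hF : aeval (update (X (R := R)) i (X j)) F = 0) : X j - X i ∣ F := by
  set I := Ideal.span {(X j - X i : MvPolynomial σ R)}
  have hmk : (Ideal.Quotient.mkₐ R I).comp (aeval (update (X (R := R)) i (X j))) =
      Ideal.Quotient.mkₐ R I := by
    ext t
    by_cases ht : t = i
    · simp [ht, I, Ideal.Quotient.mk_eq_mk_iff_sub_mem]
    · simp [ht]
  rw [← Ideal.mem_span_singleton, ← Ideal.Quotient.eq_zero_iff_mem, ← Ideal.Quotient.mkₐ_eq_mk R,
    ← hmk, AlgHom.comp_apply, hF, map_zero]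

theorem aeval_update_eq_zero_of_rename_swap_eq_neg [DecidableEq σ] [IsDomain R] [CharZero R]
    {i j : σ} {F : MvPolynomial σ R} (hF : rename (swap i j) F = -F) :
    aeval (update (X (R := R)) i (X j)) F = 0 := by
  have hswap : update (X (R := R)) i (X j) ∘ swap i j = update X i (X j) := by
    funext t
    simp only [Function.comp_apply, Function.update_apply, swap_apply_def]
    split_ifs <;> simp_all
  have h := congrArg (aeval (update (X (R := R)) i (X j))) hF
  rw [aeval_rename, hswap, map_neg] at h
  exact self_eq_neg.mp h

theorem aeval_update_X_sub_X_ne_zero [DecidableEq σ] [Nontrivial R] {p q : σ × σ}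
    (hq : q.1 ≠ q.2) (hqp : q ≠ p) (hqp' : q ≠ p.swap) :
    aeval (update (X (R := R)) p.1 (X p.2)) (X q.2 - X q.1 : MvPolynomial σ R) ≠ 0 := by
  obtain ⟨q1, q2⟩ := q
  obtain ⟨p1, p2⟩ := p
  simp only [map_sub, aeval_X, Function.update_apply, ne_eq, sub_eq_zero]
  split_ifs <;> simp [X_injective.eq_iff] <;> grind

theorem prod_X_sub_X_dvd [LinearOrder σ] [IsDomain R] {s : Finset (σ × σ)}
    (hs : ∀ p ∈ s, p.1 < p.2) {F : MvPolynomial σ R}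
    (hF : ∀ p ∈ s, aeval (update (X (R := R)) p.1 (X p.2)) F = 0) :
    ∏ p ∈ s, (X p.2 - X p.1) ∣ F := by
  induction s using Finset.induction_on generalizing F with
  | empty => simp
  | insert q s hq ih =>
    obtain ⟨G, rfl⟩ := X_sub_X_dvd_of_aeval_update_eq_zero (hF q (mem_insert_self q s))
    rw [prod_insert hq]
    refine mul_dvd_mul_left _ (ih (fun p hp => hs p (mem_insert_of_mem hp)) fun p hp => ?_)
    have hq_lt := hs q (mem_insert_self q s)
    have hp_lt := hs p (mem_insert_of_mem hp)
    have h := hF p (mem_insert_of_mem hp)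
    rw [map_mul] at h
    refine (mul_eq_zero.mp h).resolve_left (aeval_update_X_sub_X_ne_zero hq_lt.ne ?_ ?_)
    · rintro rfl; exact hq hp
    · rintro rfl; exact lt_asymm hq_lt hp_lt

end Diagonal

section Degree

variable {σ R : Type*} [CommRing R]

theorem prod_add_C_sub_prod_mem_restrictSupport {ι : Type*} (s : Finset ι)
    (ℓ : ι → MvPolynomial σ R) (c : ι → R) (hℓ : ∀ i ∈ s, (ℓ i).totalDegree ≤ 1) :
    ∏ i ∈ s, (ℓ i + C (c i)) - ∏ i ∈ s, ℓ i ∈ restrictSupport R {d | d.degree < #s} := by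
  classical
  have htop : ∏ i ∈ s, ℓ i = (∏ i ∈ s, ℓ i) * ∏ i ∈ s \ s, C (c i) := by simp
  rw [prod_add, htop, ← sum_erase_eq_sub (mem_powerset_self s)]
  refine Submodule.sum_mem _ fun t ht => ?_
  obtain ⟨hts, hts'⟩ : t ≠ s ∧ t ⊆ s := by simpa using ht
  intro m hm
  calc m.degree ≤ ((∏ i ∈ t, ℓ i) * ∏ i ∈ s \ t, C (c i)).totalDegree := le_totalDegree hm
    _ ≤ (∏ i ∈ t, ℓ i).totalDegree + (C (∏ i ∈ s \ t, c i) : MvPolynomial σ R).totalDegree := by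
      rw [map_prod]; exact totalDegree_mul _ _
    _ ≤ ∑ i ∈ t, 1 + 0 := by
      rw [totalDegree_C]
      gcongr
      exact (totalDegree_finsetProd _ _).trans (sum_le_sum fun i hi => hℓ i (hts' hi))
    _ < #s := by simpa using card_lt_card (ssubset_of_subset_of_ne hts' hts)

theorem eq_zero_of_dvd_of_mem_restrictSupport [IsDomain R] {F G : MvPolynomial σ R}
    (hGF : G ∣ F) (hF : F ∈ restrictSupport R {d | d.degree < G.totalDegree}) : F = 0 := by
  by_contra hF0
  obtain ⟨m, hm, hdeg⟩ := exists_mem_eq_sup _ (support_nonempty.mpr hF0) fun m => m.degree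
  have hle : G.totalDegree ≤ m.degree := hdeg ▸ totalDegree_le_of_dvd_of_isDomain hGF hF0
  exact (hF hm).not_ge hle

end Degree

end MvPolynomial

section Vandermonde

variable {n : ℕ} {R : Type*} [CommRing R]

theorem prod_sub_eq_det_vandermonde (v : Fin n → R) :
    ∏ p ∈ univ.filter (fun p : Fin n × Fin n => p.1 < p.2), (v p.2 - v p.1) =
      (Matrix.vandermonde v).det := by
  rw [Matrix.det_vandermonde, prod_filter, Fintype.prod_prod_type]
  simp [← prod_filter, filter_lt_eq_Ioi]

theorem prod_sub_comp_perm (v : Fin n → R) (τ : Perm (Fin n)) :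
    ∏ p ∈ univ.filter (fun p : Fin n × Fin n => p.1 < p.2), (v (τ p.2) - v (τ p.1)) =
      Perm.sign τ • ∏ p ∈ univ.filter (fun p : Fin n × Fin n => p.1 < p.2), (v p.2 - v p.1) := by
  rw [prod_sub_eq_det_vandermonde, Units.smul_def, zsmul_eq_mul, ← Matrix.det_permute]
  exact prod_sub_eq_det_vandermonde (v ∘ τ)

noncomputable def vandermondePoly (n : ℕ) (R : Type*) [CommRing R] : MvPolynomial (Fin n) R :=
  ∏ p ∈ univ.filter (fun p : Fin n × Fin n => p.1 < p.2), (X p.2 - X p.1)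

theorem eval_vandermondePoly (x : Fin n → R) :
    eval x (vandermondePoly n R) =
      ∏ p ∈ univ.filter (fun p : Fin n × Fin n => p.1 < p.2), (x p.2 - x p.1) := by
  simp [vandermondePoly]

theorem rename_swap_vandermondePoly {i j : Fin n} (hij : i ≠ j) :
    rename (swap i j) (vandermondePoly n R) = -vandermondePoly n R := by
  simp only [vandermondePoly, map_prod, map_sub, rename_X]
  rw [prod_sub_comp_perm X (swap i j), Perm.sign_swap hij]
  simp

theorem totalDegree_vandermondePoly [IsDomain R] :
    (vandermondePoly n R).totalDegree = #(univ.filter fun p : Fin n × Fin n => p.1 < p.2) := by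
  have hV : vandermondePoly n R ≠ 0 :=
    prod_ne_zero_iff.2 fun p hp => sub_ne_zero.2 (X_injective.ne (mem_filter.1 hp).2.ne')
  refine IsHomogeneous.totalDegree ?_ hV
  simpa [vandermondePoly] using IsHomogeneous.prod _ _ (fun _ => 1) fun p _ =>
    (isHomogeneous_X R p.2).sub (isHomogeneous_X R p.1)

theorem shift_vandermondePoly_sub_mem_restrictSupport (d : Fin n →₀ ℕ) :
    shift d (vandermondePoly n R) - vandermondePoly n R ∈
      restrictSupport R {m | m.degree < #(univ.filter fun p : Fin n × Fin n => p.1 < p.2)} := by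
  have h : shift d (vandermondePoly n R) =
      ∏ p ∈ univ.filter (fun p : Fin n × Fin n => p.1 < p.2),
        ((X p.2 - X p.1) + C ((d p.2 : R) - d p.1)) := by
    simp only [vandermondePoly, map_prod, map_sub, shift, aeval_X]
    refine prod_congr rfl fun p _ => ?_
    simp only [map_natCast]
    ring
  rw [h]
  exact prod_add_C_sub_prod_mem_restrictSupport _ _ _ fun p _ =>
    ((isHomogeneous_X R p.2).sub (isHomogeneous_X R p.1)).totalDegree_le

theorem vandermondePoly_dvd_of_rename_swap_eq_neg [IsDomain R] [CharZero R]
    {F : MvPolynomial (Fin n) R} (hF : ∀ i j : Fin n, i < j → rename (swap i j) F = -F) :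
    vandermondePoly n R ∣ F :=
  prod_X_sub_X_dvd (fun _ hp => (mem_filter.1 hp).2) fun _ hp =>
    aeval_update_eq_zero_of_rename_swap_eq_neg (hF _ _ (mem_filter.1 hp).2)

theorem applyShifts_vandermondePoly [IsDomain R] [CharZero R] {P : MvPolynomial (Fin n) R}
    (hP : P.IsSymmetric) :
    applyShifts P (vandermondePoly n R) = eval (fun _ => 1) P • vandermondePoly n R := by
  refine sub_eq_zero.1 (eq_zero_of_dvd_of_mem_restrictSupport
    (vandermondePoly_dvd_of_rename_swap_eq_neg fun i j hij => ?_) ?_)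
  · rw [map_sub, map_smul, rename_applyShifts (swap i j).injective, hP,
      rename_swap_vandermondePoly hij.ne, applyShifts_neg, smul_neg, neg_sub_neg, neg_sub]
  · rw [totalDegree_vandermondePoly, applyShifts_sub_eval_one_smul]
    exact Submodule.sum_mem _ fun d _ =>
      Submodule.smul_mem _ _ (shift_vandermondePoly_sub_mem_restrictSupport d)

end Vandermonde

theorem symmetric_shift_operator_on_vandermonde
    (n : ℕ) (P : MvPolynomial (Fin n) ℂ) (hP : P.IsSymmetric) (k : Fin n → ℤ) :
    ∑ d ∈ P.support, P.coeff d *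
        ∏ p ∈ Finset.univ.filter (fun p : Fin n × Fin n => p.1 < p.2),
          ((((k p.2 + d p.2) - (k p.1 + d p.1) : ℤ) : ℂ) /
            (((p.2 : ℕ) : ℂ) - ((p.1 : ℕ) : ℂ)))
      = MvPolynomial.eval (fun _ => (1 : ℂ)) P *
          ∏ p ∈ Finset.univ.filter (fun p : Fin n × Fin n => p.1 < p.2),
            (((k p.2 - k p.1 : ℤ) : ℂ) / (((p.2 : ℕ) : ℂ) - ((p.1 : ℕ) : ℂ))) := by
  have key := congrArg (eval fun i => (k i : ℂ)) (applyShifts_vandermondePoly hP)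
  simp only [eval_applyShifts, smul_eval, eval_vandermondePoly] at key
  simp only [prod_div_distrib, ← mul_div_assoc, ← sum_div]
  push_cast
  rw [← key]
end

section
/- The polynomial ∏_{1≤i<j≤n} (k_j − k_i)/(j−i) equals the determinant of the n×n matrix whose (i,j) entry is the binomial coefficient C(k_i, j−1) = k_i(k_i−1)⋯(k_i−j+2)/(j−1)!. -/
/-!
The entry `∏_{t<j} (k_i - t) / j!` is the value at `k_i` of the monic degree-`j` polynomial
`descPochhammer j`, divided by `j!`. Column operations reduce a matrix of values of monic
polynomials of degrees `0, …, n-1` to the Vandermonde matrix, so the determinant is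
`∏_{i<j} (k_j - k_i) / ∏_j j!`, and `∏_j j! = ∏_{i<j} (j - i)`.
-/

open Finset Matrix Polynomial

section PairProducts

variable {α M : Type*} [Fintype α] [LinearOrder α] [CommMonoid M]

theorem Finset.prod_filter_fst_lt_snd_eq_prod_Ioi [LocallyFiniteOrderTop α] (f : α → α → M) :
    ∏ p ∈ univ.filter (fun p : α × α => p.1 < p.2), f p.1 p.2 = ∏ i, ∏ j ∈ Ioi i, f i j := by
  rw [prod_filter, Fintype.prod_prod_type]
  refine prod_congr rfl fun i _ => ?_
  rw [← prod_filter, filter_lt_eq_Ioi]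

theorem Finset.prod_filter_fst_lt_snd_eq_prod_Iio [LocallyFiniteOrderBot α] (f : α → α → M) :
    ∏ p ∈ univ.filter (fun p : α × α => p.1 < p.2), f p.1 p.2 = ∏ j, ∏ i ∈ Iio j, f i j := by
  rw [prod_filter, Fintype.prod_prod_type, prod_comm]
  refine prod_congr rfl fun j _ => ?_
  rw [← prod_filter, filter_gt_eq_Iio]

end PairProducts

theorem Fin.prod_Iio_natCast_sub {R : Type*} [CommRing R] {n : ℕ} (j : Fin n) :
    ∏ i ∈ Iio j, (((j : ℕ) : R) - ((i : ℕ) : R)) = ((j : ℕ).factorial : R) := by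
  rw [← Nat.descFactorial_self, ← descPochhammer_eval_eq_descFactorial,
    descPochhammer_eval_eq_prod_range, ← Nat.Iio_eq_range, ← Fin.map_valEmbedding_Iio, prod_map]
  rfl

theorem prod_lt_sub_div_natCast_sub_eq_det_vandermonde_div {K : Type*} [Field K] {n : ℕ} (v : Fin n → K) :
    ∏ p ∈ univ.filter (fun p : Fin n × Fin n => p.1 < p.2),
        ((v p.2 - v p.1) / (((p.2 : ℕ) : K) - ((p.1 : ℕ) : K)))
      = (vandermonde v).det / ∏ j : Fin n, ((j : ℕ).factorial : K) := by
  rw [prod_div_distrib, prod_filter_fst_lt_snd_eq_prod_Ioi (fun i j : Fin n => v j - v i),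
    prod_filter_fst_lt_snd_eq_prod_Iio (fun i j : Fin n => ((j : ℕ) : K) - ((i : ℕ) : K)),
    det_vandermonde]
  simp only [Fin.prod_Iio_natCast_sub]

theorem Matrix.det_of_eval_descPochhammer {R : Type*} [CommRing R] [IsDomain R] {n : ℕ}
    (v : Fin n → R) :
    (of fun i j : Fin n => (descPochhammer R j).eval (v i)).det = (vandermonde v).det :=
  (det_eval_matrixOfPolynomials_eq_det_vandermonde v (fun j => descPochhammer R j)
    (fun j => descPochhammer_natDegree R j) (fun j => monic_descPochhammer R j)).symm

theorem Matrix.det_of_eval_descPochhammer_div_factorial {K : Type*} [Field K] {n : ℕ}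
    (v : Fin n → K) :
    (of fun i j : Fin n => (descPochhammer K j).eval (v i) / ((j : ℕ).factorial : K)).det
      = (vandermonde v).det / ∏ j : Fin n, ((j : ℕ).factorial : K) := by
  simp only [div_eq_inv_mul, ← prod_inv_distrib]
  rw [det_mul_row (fun j : Fin n => ((j : ℕ).factorial : K)⁻¹)
      (fun i j => (descPochhammer K j).eval (v i))]
  exact congrArg (_ * ·) (det_of_eval_descPochhammer v)

theorem vandermonde_as_binomial_determinant (n : ℕ) (k : Fin n → ℚ) :
    ∏ p ∈ Finset.univ.filter (fun p : Fin n × Fin n => p.1 < p.2),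
        ((k p.2 - k p.1) / (((p.2 : ℕ) : ℚ) - ((p.1 : ℕ) : ℚ)))
      = Matrix.det (Matrix.of fun i j : Fin n =>
          (∏ t ∈ Finset.range (j : ℕ), (k i - t)) / ((j : ℕ).factorial : ℚ)) := by
  simp only [← descPochhammer_eval_eq_prod_range]
  rw [prod_lt_sub_div_natCast_sub_eq_det_vandermonde_div, det_of_eval_descPochhammer_div_factorial]
end
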